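/- arXiv:1512.07201 — 2 statements merged into one kernel-verified Lean document; each statement's English description precedes it below -/
import Mathlib

section
/- Let P be symmetric positive definite and ε > 0 with ε⁻¹ I − P positive definite. Then for any matrices A_c, ΔA ∈ ℝ^{n×n}: A_cᵀ P ΔA + ΔAᵀ P A_c + ΔAᵀ P ΔA ≤ A_cᵀ P (ε⁻¹ I − P)⁻¹ P A_c + ε⁻¹ ΔAᵀ ΔA, in the Loewner (positive semidefinite) order. -/
open Matrix

/-- Bound on cross terms with the uncertainty (Lemma 1):
A_cᵀPΔA + ΔAᵀPA_c + ΔAᵀPΔA ⪯ A_cᵀP(ε⁻¹I−P)⁻¹PA_c + ε⁻¹ΔAᵀΔA in the Loewner order. -/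
theorem stmt_3 {n : ℕ} (P : Matrix (Fin n) (Fin n) ℝ) (ε : ℝ) (hε : 0 < ε)
    (hP : P.PosDef) (hIP : (ε⁻¹ • (1 : Matrix (Fin n) (Fin n) ℝ) - P).PosDef)
    (Ac ΔA : Matrix (Fin n) (Fin n) ℝ) :
    (Acᵀ * P * (ε⁻¹ • (1 : Matrix (Fin n) (Fin n) ℝ) - P)⁻¹ * P * Ac
      + ε⁻¹ • (ΔAᵀ * ΔA)
      - (Acᵀ * P * ΔA + ΔAᵀ * P * Ac + ΔAᵀ * P * ΔA)).PosSemidef := by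
  set Q : Matrix (Fin n) (Fin n) ℝ := ε⁻¹ • 1 - P with hQdef
  have hQsym : Qᵀ = Q := hIP.1
  have hPsym : Pᵀ = P := hP.1
  have hdet : IsUnit Q.det := isUnit_iff_ne_zero.mpr hIP.det_pos.ne'
  have hQinvsym : Q⁻¹ᵀ = Q⁻¹ := by
    rw [Matrix.transpose_nonsing_inv, hQsym]
  have key : (ΔA - Q⁻¹ * P * Ac)ᵀ * Q * (ΔA - Q⁻¹ * P * Ac) =
      Acᵀ * P * Q⁻¹ * P * Ac + ε⁻¹ • (ΔAᵀ * ΔA)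
      - (Acᵀ * P * ΔA + ΔAᵀ * P * Ac + ΔAᵀ * P * ΔA) := by
    have e1 : (ΔA - Q⁻¹ * P * Ac)ᵀ * Q * (ΔA - Q⁻¹ * P * Ac) =
        ΔAᵀ * Q * ΔA - ΔAᵀ * (Q * Q⁻¹) * (P * Ac)
        - Acᵀ * P * (Q⁻¹ * Q) * ΔA
        + Acᵀ * P * (Q⁻¹ * Q) * Q⁻¹ * (P * Ac) := by
      simp only [Matrix.transpose_sub, Matrix.transpose_mul, hPsym, hQinvsym,
        Matrix.sub_mul, Matrix.mul_sub]
      noncomm_ring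
    rw [e1, Matrix.mul_nonsing_inv _ hdet, Matrix.nonsing_inv_mul _ hdet]
    have e2 : ΔAᵀ * Q * ΔA = ε⁻¹ • (ΔAᵀ * ΔA) - ΔAᵀ * P * ΔA := by
      rw [hQdef]
      simp [Matrix.mul_sub, Matrix.sub_mul, Matrix.mul_smul, Matrix.smul_mul]
    rw [e2]
    simp only [Matrix.mul_one]
    abel_nf
    noncomm_ring
  rw [← key]
  have h := hIP.posSemidef.conjTranspose_mul_mul_same (ΔA - Q⁻¹ * P * Ac)
  simpa using h
end

section
/- Let P > 0 satisfy the Riccati equation Aᵀ S⁻¹ A − P + Q + F + β² I = 0, where S = P⁻¹ + B R₁⁻¹ Bᵀ + α² (I − BB⁺) R₂⁻¹ (I − BB⁺)ᵀ, with Q ⪰ 0, R₁, R₂ ≻ 0, β, α scalars. If additionally ε > 0 satisfies (ε⁻¹ I − P)⁻¹ ≻ 0, ε⁻¹ ΔAᵀ ΔA ⪯ F, and β² I + Lᵀ R₂ L + Kᵀ R₁ K − A_cᵀ (P⁻¹ − ε I)⁻¹ A_c ⪰ 0 where K = −R₁⁻¹ Bᵀ S⁻¹ A, L = −α R₂⁻¹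 (I − BB⁺) S⁻¹ A, and A_c = A + BK, then V(x) = xᵀ P x satisfies V(x(k+1)) − V(x(k)) ≤ 0 along trajectories of x(k+1) = (A + ΔA + BK) x(k). -/
/-!
Set `M = (P⁻¹ - εI)⁻¹` and `A_Δ = A_c + ΔA`. Writing `Aᵀ S⁻¹ A = (S⁻¹A)ᵀ S (S⁻¹A)` and
expanding `S` turns the Riccati equation into
`P = (S⁻¹A)ᵀ P⁻¹ (S⁻¹A) + Kᵀ R₁ K + Lᵀ R₂ L + Q + F + β² I`.
With `X = ε⁻¹I - P ≻ 0` one has `M = P + P X⁻¹ P`, and completing the square gives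
`A_cᵀ M A_c + ε⁻¹ ΔAᵀ ΔA - A_Δᵀ P A_Δ = (X⁻¹ P A_c - ΔA)ᵀ X (X⁻¹ P A_c - ΔA) ⪰ 0`.
Hence `P - A_Δᵀ P A_Δ` is a sum of four positive semidefinite matrices, so `V` decreases along the
closed loop.
-/

open Matrix

variable {ι κ 𝕜 : Type*}

namespace Matrix

section Field

variable [Field 𝕜]

lemma transpose_mul_mul_gain_eq [Fintype ι] [Fintype κ] [DecidableEq κ]
    {R : Matrix κ κ 𝕜} (hRt : Rᵀ = R) (hR : IsUnit R.det)
    {W : Matrix ι ι 𝕜} (hWt : Wᵀ = W) (B : Matrix ι κ 𝕜) (A : Matrix ι ι 𝕜) :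
    (R⁻¹ * Bᵀ * W * A)ᵀ * R * (R⁻¹ * Bᵀ * W * A) = Aᵀ * W * (B * R⁻¹ * Bᵀ) * W * A := by
  have hRit : R⁻¹ᵀ = R⁻¹ := by rw [transpose_nonsing_inv, hRt]
  simp only [transpose_mul, transpose_transpose, hRit, hWt, Matrix.mul_assoc,
    nonsing_inv_mul_cancel_left _ _ hR]

lemma transpose_mul_inv_mul_eq_of_eq_add [Fintype ι] [Fintype κ] [DecidableEq ι] [DecidableEq κ]
    {N S R₂ C : Matrix ι ι 𝕜} {R₁ : Matrix κ κ 𝕜} {B : Matrix ι κ 𝕜} {α : 𝕜}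
    (hS : S = N + B * R₁⁻¹ * Bᵀ + α ^ 2 • (C * R₂⁻¹ * Cᵀ)) (hSt : Sᵀ = S) (hSu : IsUnit S.det)
    (hR₁t : R₁ᵀ = R₁) (hR₁ : IsUnit R₁.det) (hR₂t : R₂ᵀ = R₂) (hR₂ : IsUnit R₂.det)
    (A : Matrix ι ι 𝕜) :
    Aᵀ * S⁻¹ * A = (S⁻¹ * A)ᵀ * N * (S⁻¹ * A)
      + (-(R₁⁻¹ * Bᵀ * S⁻¹ * A))ᵀ * R₁ * (-(R₁⁻¹ * Bᵀ * S⁻¹ * A))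
      + (-(α • (R₂⁻¹ * Cᵀ * S⁻¹ * A)))ᵀ * R₂ * (-(α • (R₂⁻¹ * Cᵀ * S⁻¹ * A))) := by
  have hSit : S⁻¹ᵀ = S⁻¹ := by rw [transpose_nonsing_inv, hSt]
  have hsandwich : Aᵀ * S⁻¹ * A = (S⁻¹ * A)ᵀ * S * (S⁻¹ * A) := by
    rw [transpose_mul, hSit, Matrix.mul_assoc _ S, mul_nonsing_inv_cancel_left _ _ hSu,
      Matrix.mul_assoc]
  simp only [transpose_neg, transpose_smul, Matrix.neg_mul, Matrix.mul_neg, neg_neg, smul_neg,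
    smul_mul_assoc, mul_smul_comm, smul_smul, ← pow_two,
    transpose_mul_mul_gain_eq hR₁t hR₁ hSit, transpose_mul_mul_gain_eq hR₂t hR₂ hSit]
  rw [hsandwich]
  nth_rewrite 2 [hS]
  simp only [transpose_mul, hSit, Matrix.mul_add, Matrix.add_mul, Matrix.mul_smul,
    Matrix.smul_mul, Matrix.mul_assoc]

/-- An instance of the Woodbury identity. -/
lemma inv_sub_smul_one_eq [Fintype ι] [DecidableEq ι]
    {P : Matrix ι ι 𝕜} (hP : IsUnit P.det) {ε : 𝕜} (hε : ε ≠ 0)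
    (hX : IsUnit (ε⁻¹ • (1 : Matrix ι ι 𝕜) - P).det) :
    (P⁻¹ - ε • (1 : Matrix ι ι 𝕜))⁻¹ = P + P * (ε⁻¹ • (1 : Matrix ι ι 𝕜) - P)⁻¹ * P := by
  set X := ε⁻¹ • (1 : Matrix ι ι 𝕜) - P
  have hεX : ε • X = 1 - ε • P := by
    rw [smul_sub, smul_smul, mul_inv_cancel₀ hε, one_smul]
  apply inv_eq_right_inv
  calc (P⁻¹ - ε • 1) * (P + P * X⁻¹ * P) = 1 - ε • P + ε • X * (X⁻¹ * P) := by
        rw [hεX]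
        simp only [Matrix.sub_mul, Matrix.mul_add, smul_mul_assoc, Matrix.one_mul,
          Matrix.mul_assoc, nonsing_inv_mul_cancel_left _ _ hP, nonsing_inv_mul _ hP]
    _ = 1 := by
      rw [smul_mul_assoc, mul_nonsing_inv_cancel_left _ _ hX]
      abel

lemma transpose_mul_mul_sub_eq_square [Fintype ι] [DecidableEq ι]
    {P : Matrix ι ι 𝕜} (hPt : Pᵀ = P) {ε : 𝕜}
    (hX : IsUnit (ε⁻¹ • (1 : Matrix ι ι 𝕜) - P).det) (M D : Matrix ι κ 𝕜) :
    Mᵀ * (P + P * (ε⁻¹ • (1 : Matrix ι ι 𝕜) - P)⁻¹ * P) * M + ε⁻¹ • (Dᵀ * D)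
        - (M + D)ᵀ * P * (M + D)
      = ((ε⁻¹ • (1 : Matrix ι ι 𝕜) - P)⁻¹ * P * M - D)ᵀ * (ε⁻¹ • (1 : Matrix ι ι 𝕜) - P)
          * ((ε⁻¹ • (1 : Matrix ι ι 𝕜) - P)⁻¹ * P * M - D) := by
  set X := ε⁻¹ • (1 : Matrix ι ι 𝕜) - P with hXdef
  have hXit : X⁻¹ᵀ = X⁻¹ := by
    rw [transpose_nonsing_inv, hXdef, transpose_sub, transpose_smul, transpose_one, hPt]
  have hXD : Dᵀ * (X * D) = ε⁻¹ • (Dᵀ * D) - Dᵀ * (P * D) := by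
    simp only [hXdef, Matrix.sub_mul, Matrix.smul_mul, Matrix.one_mul, Matrix.mul_sub,
      Matrix.mul_smul]
  simp only [transpose_sub, transpose_add, transpose_mul, hXit, hPt, Matrix.sub_mul,
    Matrix.mul_sub, Matrix.add_mul, Matrix.mul_add, Matrix.mul_assoc,
    mul_nonsing_inv_cancel_left _ _ hX, nonsing_inv_mul_cancel_left _ _ hX, hXD]
  abel

end Field

lemma PosDef.transpose_eq {M : Matrix ι ι ℝ} (hM : M.PosDef) : Mᵀ = M :=
  (conjTranspose_eq_transpose_of_trivial M).symm.trans hM.isHermitian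

lemma PosDef.isUnit_det [Fintype ι] [DecidableEq ι] {M : Matrix ι ι ℝ} (hM : M.PosDef) :
    IsUnit M.det :=
  (isUnit_iff_isUnit_det M).1 hM.isUnit

lemma PosSemidef.transpose_mul_mul_same [Fintype ι] [Fintype κ]
    {M : Matrix ι ι ℝ} (hM : M.PosSemidef) (W : Matrix ι κ ℝ) : (Wᵀ * M * W).PosSemidef := by
  simpa only [conjTranspose_eq_transpose_of_trivial] using hM.conjTranspose_mul_mul_same W

lemma PosSemidef.mul_mul_transpose_same [Fintype ι] [Fintype κ]
    {M : Matrix ι ι ℝ} (hM : M.PosSemidef) (W : Matrix κ ι ℝ) : (W * M * Wᵀ).PosSemidef := by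
  simpa only [conjTranspose_eq_transpose_of_trivial] using hM.mul_mul_conjTranspose_same W

lemma posSemidef_uncertainty_bound [Fintype ι] [Fintype κ] [DecidableEq ι] {P : Matrix ι ι ℝ}
    (hP : P.PosDef) {ε : ℝ} (hε : 0 < ε) (hX : (ε⁻¹ • (1 : Matrix ι ι ℝ) - P).PosDef)
    (M D : Matrix ι κ ℝ) :
    (Mᵀ * (P⁻¹ - ε • (1 : Matrix ι ι ℝ))⁻¹ * M + ε⁻¹ • (Dᵀ * D)
      - (M + D)ᵀ * P * (M + D)).PosSemidef := by
  rw [inv_sub_smul_one_eq hP.isUnit_det hε.ne' hX.isUnit_det,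
    transpose_mul_mul_sub_eq_square hP.transpose_eq hX.isUnit_det]
  exact hX.posSemidef.transpose_mul_mul_same _

lemma dotProduct_mulVec_le_of_posSemidef_sub [Fintype ι] {P M : Matrix ι ι ℝ}
    (h : (P - Mᵀ * P * M).PosSemidef) (v : ι → ℝ) :
    (M *ᵥ v) ⬝ᵥ P *ᵥ (M *ᵥ v) ≤ v ⬝ᵥ P *ᵥ v := by
  have hquad : v ⬝ᵥ (Mᵀ * P * M) *ᵥ v = (M *ᵥ v) ⬝ᵥ P *ᵥ (M *ᵥ v) := by
    rw [← mulVec_mulVec, ← mulVec_mulVec, dotProduct_mulVec, vecMul_transpose]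
  have hv := h.dotProduct_mulVec_nonneg v
  rw [star_trivial, sub_mulVec, dotProduct_sub, hquad] at hv
  linarith

end Matrix

theorem stmt_8_general {n m : ℕ}
    (A ΔA P Q F R₂ : Matrix (Fin n) (Fin n) ℝ)
    (B : Matrix (Fin n) (Fin m) ℝ) (R₁ : Matrix (Fin m) (Fin m) ℝ)
    (Bplus : Matrix (Fin m) (Fin n) ℝ)
    (h3 : (B * Bplus)ᵀ = B * Bplus)
    (β α ε : ℝ) (hε : 0 < ε)
    (hP : P.PosDef) (hQ : Q.PosSemidef) (hR1 : R₁.PosDef) (hR2 : R₂.PosDef)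
    (S : Matrix (Fin n) (Fin n) ℝ)
    (hS : S = P⁻¹ + B * R₁⁻¹ * Bᵀ
      + α ^ 2 • ((1 - B * Bplus) * R₂⁻¹ * (1 - B * Bplus)ᵀ))
    (hRic : Aᵀ * S⁻¹ * A - P + Q + F + β ^ 2 • (1 : Matrix (Fin n) (Fin n) ℝ) = 0)
    (hinv : ((ε⁻¹ • (1 : Matrix (Fin n) (Fin n) ℝ) - P)⁻¹).PosDef)
    (hF : (F - ε⁻¹ • (ΔAᵀ * ΔA)).PosSemidef)
    (K : Matrix (Fin m) (Fin n) ℝ) (hK : K = -(R₁⁻¹ * Bᵀ * S⁻¹ * A))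
    (L : Matrix (Fin n) (Fin n) ℝ)
    (hL : L = -(α • (R₂⁻¹ * (1 - B * Bplus) * S⁻¹ * A)))
    (Ac : Matrix (Fin n) (Fin n) ℝ) (hAc : Ac = A + B * K)
    (hcond : (β ^ 2 • (1 : Matrix (Fin n) (Fin n) ℝ) + Lᵀ * R₂ * L + Kᵀ * R₁ * K
        - Acᵀ * (P⁻¹ - ε • (1 : Matrix (Fin n) (Fin n) ℝ))⁻¹ * Ac).PosSemidef)
    (x : ℕ → Fin n → ℝ)
    (hdyn : ∀ k, x (k + 1) = (A + ΔA + B * K) *ᵥ x k) :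
    ∀ k, x (k + 1) ⬝ᵥ P *ᵥ x (k + 1) - x k ⬝ᵥ P *ᵥ x k ≤ 0 := by
  have hG : (1 - B * Bplus)ᵀ = 1 - B * Bplus := by rw [transpose_sub, transpose_one, h3]
  have hSpd : S.PosDef := hS ▸ (hP.inv.add_posSemidef
    (hR1.inv.posSemidef.mul_mul_transpose_same B)).add_posSemidef
    ((hR2.inv.posSemidef.mul_mul_transpose_same _).smul (sq_nonneg α))
  have hsplit := transpose_mul_inv_mul_eq_of_eq_add hS hSpd.transpose_eq hSpd.isUnit_det
    hR1.transpose_eq hR1.isUnit_det hR2.transpose_eq hR2.isUnit_det A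
  rw [← hK, hG, ← hL] at hsplit
  have hrobust := posSemidef_uncertainty_bound hP hε
    (posDef_inv_iff.mp hinv) Ac ΔA
  have hdecrease : (P - (Ac + ΔA)ᵀ * P * (Ac + ΔA)).PosSemidef := by
    convert ((hrobust.add hcond).add hF).add
      (hQ.add (hP.inv.posSemidef.transpose_mul_mul_same (S⁻¹ * A))) using 1
    rw [eq_comm, ← sub_eq_zero, ← hRic, hsplit]
    abel
  have hclosed : A + ΔA + B * K = Ac + ΔA := by rw [hAc]; abel
  intro k
  rw [hdyn k, hclosed, sub_nonpos]
  exact dotProduct_mulVec_le_of_posSemidef_sub hdecrease (x k)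

/-- Theorem 1 of the paper: under the Riccati equation and the stated definiteness
conditions, V(x) = xᵀPx is nonincreasing along the uncertain closed loop
x(k+1) = (A + ΔA + BK)x(k). -/
theorem stmt_8 {n m : ℕ}
    (A ΔA P Q F R₂ : Matrix (Fin n) (Fin n) ℝ)
    (B : Matrix (Fin n) (Fin m) ℝ) (R₁ : Matrix (Fin m) (Fin m) ℝ)
    (Bplus : Matrix (Fin m) (Fin n) ℝ)
    (h1 : B * Bplus * B = B) (h2 : Bplus * B * Bplus = Bplus)
    (h3 : (B * Bplus)ᵀ = B * Bplus) (h4 : (Bplus * B)ᵀ = Bplus * B)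
    (β α ε : ℝ) (hε : 0 < ε)
    (hP : P.PosDef) (hQ : Q.PosSemidef) (hR1 : R₁.PosDef) (hR2 : R₂.PosDef)
    (S : Matrix (Fin n) (Fin n) ℝ)
    (hS : S = P⁻¹ + B * R₁⁻¹ * Bᵀ
      + α ^ 2 • ((1 - B * Bplus) * R₂⁻¹ * (1 - B * Bplus)ᵀ))
    (hRic : Aᵀ * S⁻¹ * A - P + Q + F + β ^ 2 • (1 : Matrix (Fin n) (Fin n) ℝ) = 0)
    (hinv : ((ε⁻¹ • (1 : Matrix (Fin n) (Fin n) ℝ) - P)⁻¹).PosDef)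
    (hF : (F - ε⁻¹ • (ΔAᵀ * ΔA)).PosSemidef)
    (K : Matrix (Fin m) (Fin n) ℝ) (hK : K = -(R₁⁻¹ * Bᵀ * S⁻¹ * A))
    (L : Matrix (Fin n) (Fin n) ℝ)
    (hL : L = -(α • (R₂⁻¹ * (1 - B * Bplus) * S⁻¹ * A)))
    (Ac : Matrix (Fin n) (Fin n) ℝ) (hAc : Ac = A + B * K)
    (hcond : (β ^ 2 • (1 : Matrix (Fin n) (Fin n) ℝ) + Lᵀ * R₂ * L + Kᵀ * R₁ * K
        - Acᵀ * (P⁻¹ - ε • (1 : Matrix (Fin n) (Fin n) ℝ))⁻¹ * Ac).PosSemidef)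
    (x : ℕ → Fin n → ℝ)
    (hdyn : ∀ k, x (k + 1) = (A + ΔA + B * K) *ᵥ x k) :
    ∀ k, x (k + 1) ⬝ᵥ P *ᵥ x (k + 1) - x k ⬝ᵥ P *ᵥ x k ≤ 0 :=
  stmt_8_general A ΔA P Q F R₂ B R₁ Bplus h3 β α ε hε hP hQ hR1 hR2 S hS hRic hinv hF K hK L hL Ac
    hAc hcond x hdyn
end
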